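/- Under the Tobit model, if E[‖X Xᵀ‖] < ∞ (e.g. if E[X Xᵀ] exists and is finite entrywise), then there exists a neighborhood N of the true parameter (δ₀, γ₀) in ℝ^K × (0, ∞) such that E[ sup_{(δ,γ) ∈ N} ‖H(Y, X, D; δ, γ)‖ ] < ∞, where the supremum of the Frobenius norm of the Tobit Hessian over N is taken pointwise in the sample (Y, X, D). (This is the local dominance condition on the Hessian for the Tobit model.) -/

import Mathlib

open MeasureTheory ProbabilityTheory Real Filter Set
open Topology NNReal

noncomputable section

/-- The standard normal density `φ`. -/
def gPDF (t : ℝ) : ℝ := (Real.sqrt (2 * Real.pi))⁻¹ * Real.exp (-t ^ 2 / 2)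

/-- The standard normal cumulative distribution function `Φ`. -/
def gCDF (t : ℝ) : ℝ := ∫ s in Set.Iic t, gPDF s

/-- The inverse Mills ratio `λ(v) = φ(v)/(1 - Φ(v))`. -/
def mills (v : ℝ) : ℝ := gPDF v / (1 - gCDF v)

/-- Euclidean norm of a vector in `ℝ^n`. -/
def vnorm {n : ℕ} (x : Fin n → ℝ) : ℝ := Real.sqrt (∑ i, (x i) ^ 2)

/-- Frobenius (Euclidean) norm of a real matrix. -/
def frob {m n : Type*} [Fintype m] [Fintype n] (M : Matrix m n ℝ) : ℝ :=
  Real.sqrt (∑ i, ∑ j, (M i j) ^ 2)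

/-- Dot product `xᵀδ`. -/
def dotp {n : ℕ} (x δ : Fin n → ℝ) : ℝ := ∑ i, x i * δ i

/-- The block matrix `[[x xᵀ, -y·x], [-y·xᵀ, γ⁻² + y²]]`. -/
def blockA (K : ℕ) (x : Fin K → ℝ) (y γ : ℝ) :
    Matrix (Fin K ⊕ Unit) (Fin K ⊕ Unit) ℝ :=
  Matrix.fromBlocks (Matrix.vecMulVec x x) (Matrix.of fun i _ => -(y * x i))
    (Matrix.of fun _ j => -(y * x j)) (Matrix.of fun _ _ => γ⁻¹ ^ 2 + y ^ 2)

/-- The block matrix `[[x xᵀ, -c·x], [-c·xᵀ, c²]]`. -/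
def blockB (K : ℕ) (x : Fin K → ℝ) (c : ℝ) :
    Matrix (Fin K ⊕ Unit) (Fin K ⊕ Unit) ℝ :=
  Matrix.fromBlocks (Matrix.vecMulVec x x) (Matrix.of fun i _ => -(c * x i))
    (Matrix.of fun _ j => -(c * x j)) (Matrix.of fun _ _ => c ^ 2)

/-- The Hessian of the reparameterized log conditional likelihood of the truncated
regression model, `H(y, x; δ, γ)` with `v = γc - xᵀδ`. -/
def truncHess (K : ℕ) (c y : ℝ) (x δ : Fin K → ℝ) (γ : ℝ) :
    Matrix (Fin K ⊕ Unit) (Fin K ⊕ Unit) ℝ :=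
  -(blockA K x y γ) +
    (mills (γ * c - dotp x δ) * (mills (γ * c - dotp x δ) - (γ * c - dotp x δ))) • blockB K x c

/-- The Hessian of the reparameterized log conditional likelihood of the Tobit model,
`H(y, x, d; δ, γ)` with `v = γc - xᵀδ`. -/
def tobitHess (K : ℕ) (c y : ℝ) (x : Fin K → ℝ) (d : ℝ) (δ : Fin K → ℝ) (γ : ℝ) :
    Matrix (Fin K ⊕ Unit) (Fin K ⊕ Unit) ℝ :=
  -((1 - d) • blockA K x y γ) -
    (d * mills (-(γ * c - dotp x δ)) * (mills (-(γ * c - dotp x δ)) + (γ * c - dotp x δ))) •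
      blockB K x c

/-- The score of the reparameterized log conditional likelihood of the Tobit model,
`s(y, x, d; δ, γ)` with `v = γc - xᵀδ`. -/
def tobitScore (K : ℕ) (c y : ℝ) (x : Fin K → ℝ) (d : ℝ) (δ : Fin K → ℝ) (γ : ℝ) :
    Fin K ⊕ Unit → ℝ := fun j =>
  (1 - d) *
      Sum.elim (fun i => (γ * y - dotp x δ) * x i) (fun _ => 1 / γ - (γ * y - dotp x δ) * y) j
    + d * mills (-(γ * c - dotp x δ)) * Sum.elim (fun i => -x i) (fun _ => c) j


lemma gPDF_pos (t : ℝ) : 0 < gPDF t := by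
  have h : 0 < Real.sqrt (2 * Real.pi) := Real.sqrt_pos.2 (by positivity)
  exact mul_pos (inv_pos.2 h) (Real.exp_pos _)

lemma gPDF_cont : Continuous gPDF := by
  unfold gPDF
  exact continuous_const.mul (Real.continuous_exp.comp (((continuous_pow 2 : Continuous fun t : ℝ => t ^ 2).neg).div_const 2))

lemma gPDF_eq (t : ℝ) : gPDF t = (Real.sqrt (2 * Real.pi))⁻¹ * Real.exp (-(1/2) * t ^ 2) := by
  unfold gPDF; ring_nf

lemma gPDF_integrable : Integrable gPDF := by
  have := (integrable_exp_neg_mul_sq (by norm_num : (0:ℝ) < 1/2)).const_mul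
    (Real.sqrt (2 * Real.pi))⁻¹
  refine this.congr (by filter_upwards with t using (gPDF_eq t).symm)

lemma integral_gPDF : ∫ t, gPDF t = 1 := by
  have h := integral_gaussian (1/2 : ℝ)
  have : ∫ t, gPDF t = (Real.sqrt (2 * Real.pi))⁻¹ * ∫ t : ℝ, Real.exp (-(1/2) * t ^ 2) := by
    rw [← integral_const_mul]
    exact integral_congr_ae (by filter_upwards with t using gPDF_eq t)
  rw [this, h]
  rw [show (Real.pi / (1/2)) = 2 * Real.pi by ring]
  rw [inv_mul_cancel₀ (by positivity)]

lemma hasDerivAt_gCDF (t : ℝ) : HasDerivAt gCDF (gPDF t) t := by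
  have hfun : ∀ u : ℝ, gCDF u = gCDF 0 + ∫ s in (0:ℝ)..u, gPDF s := by
    intro u
    have := intervalIntegral.integral_Iic_sub_Iic (gPDF_integrable.integrableOn (s := Iic 0))
      (gPDF_integrable.integrableOn (s := Iic u))
    unfold gCDF; linarith [this]
  have h1 : HasDerivAt (fun u => gCDF 0 + ∫ s in (0:ℝ)..u, gPDF s) (gPDF t) t := by
    refine HasDerivAt.const_add _ ?_
    refine intervalIntegral.integral_hasDerivAt_right
      (gPDF_integrable.intervalIntegrable)
      gPDF_cont.stronglyMeasurable.stronglyMeasurableAtFilter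
      gPDF_cont.continuousAt
  exact h1.congr_of_eventuallyEq (by filter_upwards with u using (hfun u))

lemma Q_eq (t : ℝ) : 1 - gCDF t = ∫ s in Ioi t, gPDF s := by
  have := intervalIntegral.integral_Iic_add_Ioi (b := t) (f := gPDF) (μ := volume)
    gPDF_integrable.integrableOn gPDF_integrable.integrableOn
  rw [integral_gPDF] at this
  unfold gCDF; linarith

lemma Q_pos (t : ℝ) : 0 < 1 - gCDF t := by
  rw [Q_eq]
  have h1 : ∫ s in Ioc t (t+1), gPDF s ≤ ∫ s in Ioi t, gPDF s := by
    apply setIntegral_mono_set gPDF_integrable.integrableOn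
      (by filter_upwards with s using (gPDF_pos s).le)
    exact HasSubset.Subset.eventuallyLE (fun s hs => hs.1)
  have h2 : 0 < ∫ s in Ioc t (t+1), gPDF s := by
    rw [← intervalIntegral.integral_of_le (by linarith)]
    apply intervalIntegral.intervalIntegral_pos_of_pos_on
      (gPDF_integrable.intervalIntegrable)
      (fun x _ => gPDF_pos x) (by linarith)
  linarith

lemma hasDerivAt_gPDF (t : ℝ) : HasDerivAt gPDF (-t * gPDF t) t := by
  have h1 : HasDerivAt (fun u : ℝ => -u ^ 2 / 2) (-t) t := by
    have := ((hasDerivAt_pow 2 t).neg).div_const 2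
    simpa using this.congr_deriv (by push_cast; ring)
  have := (h1.exp).const_mul (Real.sqrt (2 * Real.pi))⁻¹
  unfold gPDF
  refine this.congr_deriv ?_
  ring

lemma gPDF_tendsto : Tendsto gPDF atTop (𝓝 0) := by
  have h : Tendsto (fun t : ℝ => -t ^ 2 / 2) atTop atBot := by
    apply Filter.Tendsto.atBot_div_const (by norm_num)
    exact tendsto_neg_atBot_iff.2 (tendsto_pow_atTop (by norm_num))
  have h2 := (Real.tendsto_exp_atBot.comp h).const_mul (Real.sqrt (2 * Real.pi))⁻¹
  rw [mul_zero] at h2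
  refine h2.congr (fun t => ?_)
  simp only [Function.comp]
  rw [gPDF]

lemma mul_gPDF_tendsto : Tendsto (fun t => t * gPDF t) atTop (𝓝 0) := by
  have h : Tendsto (fun t : ℝ => (Real.sqrt (2 * Real.pi))⁻¹ * (t * Real.exp (-t))) atTop (𝓝 0) := by
    have := (Real.tendsto_pow_mul_exp_neg_atTop_nhds_zero 1).const_mul (Real.sqrt (2 * Real.pi))⁻¹
    simpa using this
  apply squeeze_zero_norm' _ h
  filter_upwards [eventually_ge_atTop (2:ℝ)] with t ht
  have ht0 : (0:ℝ) ≤ t := by linarith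
  have hexp : Real.exp (-t ^ 2 / 2) ≤ Real.exp (-t) := by
    apply Real.exp_le_exp.2; nlinarith
  have : |t * gPDF t| = (Real.sqrt (2 * Real.pi))⁻¹ * (t * Real.exp (-t ^ 2 / 2)) := by
    rw [abs_of_nonneg]
    · unfold gPDF; ring
    · exact mul_nonneg ht0 (gPDF_pos t).le
  rw [Real.norm_eq_abs, this]
  have hs : (0:ℝ) ≤ (Real.sqrt (2 * Real.pi))⁻¹ := by positivity
  apply mul_le_mul_of_nonneg_left _ hs
  exact mul_le_mul_of_nonneg_left hexp ht0

lemma id_gPDF_integrable : Integrable (fun s => s * gPDF s) := by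
  have := (integrable_mul_exp_neg_mul_sq (by norm_num : (0:ℝ) < 1/2)).const_mul
    (Real.sqrt (2 * Real.pi))⁻¹
  refine this.congr (by filter_upwards with t; rw [gPDF_eq]; ring)

lemma integral_id_gPDF (u : ℝ) : ∫ s in Ioi u, s * gPDF s = gPDF u := by
  have := integral_Ioi_of_hasDerivAt_of_tendsto' (a := u) (f := fun s => -gPDF s)
    (f' := fun s => s * gPDF s) (m := 0)
    (fun x _ => by have := (hasDerivAt_gPDF x).neg; simp only [neg_mul, neg_neg] at this; exact this)
    (id_gPDF_integrable.integrableOn)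
    (by simpa using gPDF_tendsto.neg)
  simpa using this

lemma Q_tendsto : Tendsto (fun t => 1 - gCDF t) atTop (𝓝 0) := by
  have h : Tendsto gCDF atTop (𝓝 1) := by
    have := (MeasureTheory.aecover_Iic (μ := volume) (l := atTop) (b := fun t : ℝ => t)
      tendsto_id).integral_tendsto_of_countably_generated gPDF_integrable
    rwa [integral_gPDF] at this
  simpa using (tendsto_const_nhds (x := (1:ℝ)) (f := atTop)).sub h

lemma k_nonneg (u : ℝ) : u * (1 - gCDF u) ≤ gPDF u := by
  rcases le_or_gt u 0 with hu | hu
  · have := Q_pos u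
    nlinarith [gPDF_pos u]
  · have h1 : u * (1 - gCDF u) = ∫ s in Ioi u, u * gPDF s := by
      rw [Q_eq, ← integral_const_mul]
    rw [h1, ← integral_id_gPDF u]
    apply setIntegral_mono_on (gPDF_integrable.integrableOn.const_mul u)
      (id_gPDF_integrable.integrableOn) measurableSet_Ioi
    intro s hs
    exact mul_le_mul_of_nonneg_right (le_of_lt hs) (gPDF_pos s).le

lemma g_nonneg (u : ℝ) : u * gPDF u ≤ (1 + u ^ 2) * (1 - gCDF u) := by
  set f : ℝ → ℝ := fun s => (1 - gCDF s) - s * gPDF s / (1 + s ^ 2) with hf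
  have hderiv : ∀ s : ℝ, HasDerivAt f (-2 * gPDF s / (1 + s ^ 2) ^ 2) s := by
    intro s
    have h1 : HasDerivAt (fun s : ℝ => 1 - gCDF s) (-gPDF s) s := by
      simpa using ((hasDerivAt_gCDF s).const_sub 1)
    have hnum : HasDerivAt (fun s : ℝ => s * gPDF s) ((1 - s ^ 2) * gPDF s) s := by
      have := (hasDerivAt_id s).mul (hasDerivAt_gPDF s)
      simp only [id] at this
      refine this.congr_deriv ?_; ring
    have hden : HasDerivAt (fun s : ℝ => 1 + s ^ 2) (2 * s) s := by
      simpa using ((hasDerivAt_pow 2 s).const_add 1)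
    have hden0 : (1 + s ^ 2) ≠ 0 := by positivity
    have h2 := hnum.div hden hden0
    have := h1.sub h2
    refine this.congr_deriv ?_
    field_simp
    ring
  have htop : Tendsto f atTop (𝓝 0) := by
    have h2 : Tendsto (fun s : ℝ => s * gPDF s / (1 + s ^ 2)) atTop (𝓝 0) := by
      apply squeeze_zero_norm' _ mul_gPDF_tendsto
      filter_upwards [eventually_ge_atTop (0:ℝ)] with s hs
      rw [Real.norm_eq_abs, abs_div, abs_of_nonneg (mul_nonneg hs (gPDF_pos s).le),
        abs_of_nonneg (by positivity : (0:ℝ) ≤ 1 + s ^ 2)]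
      apply div_le_self (mul_nonneg hs (gPDF_pos s).le)
      nlinarith
    simpa using Q_tendsto.sub h2
  have key := integral_Ioi_of_hasDerivAt_of_nonpos' (a := u) (g := f)
    (g' := fun s => -2 * gPDF s / (1 + s ^ 2) ^ 2)
    (fun s _ => hderiv s)
    (fun s _ => by
      have := gPDF_pos s
      have h2 : (0:ℝ) < (1 + s ^ 2) ^ 2 := by positivity
      apply div_nonpos_of_nonpos_of_nonneg <;> nlinarith)
    htop
  have hint : ∫ s in Ioi u, (-2 * gPDF s / (1 + s ^ 2) ^ 2) ≤ 0 := by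
    apply setIntegral_nonpos measurableSet_Ioi
    intro s _
    have := gPDF_pos s
    have h2 : (0:ℝ) < (1 + s ^ 2) ^ 2 := by positivity
    apply div_nonpos_of_nonpos_of_nonneg <;> nlinarith
  have hfu : 0 ≤ f u := by rw [key] at hint; linarith
  rw [hf] at hfu
  simp only at hfu
  have hden0 : (0:ℝ) < 1 + u ^ 2 := by positivity
  rw [sub_nonneg, div_le_iff₀ hden0] at hfu
  linarith [hfu]

lemma h_nonneg (u : ℝ) :
    gPDF u * gPDF u - u * gPDF u * (1 - gCDF u) ≤ (1 - gCDF u) ^ 2 := by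
  set H : ℝ → ℝ := fun s => (1 - gCDF s) ^ 2 - gPDF s ^ 2 + s * gPDF s * (1 - gCDF s) with hH
  have hderiv : ∀ s : ℝ, HasDerivAt H
      (-(gPDF s * ((1 + s ^ 2) * (1 - gCDF s) - s * gPDF s))) s := by
    intro s
    have hQ : HasDerivAt (fun s : ℝ => 1 - gCDF s) (-gPDF s) s := by
      simpa using ((hasDerivAt_gCDF s).const_sub 1)
    have h1 : HasDerivAt (fun s : ℝ => (1 - gCDF s) ^ 2) (2 * (1 - gCDF s) * (-gPDF s)) s := by
      have := hQ.pow 2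
      refine this.congr_deriv ?_; push_cast; ring
    have h2 : HasDerivAt (fun s : ℝ => gPDF s ^ 2) (2 * gPDF s * (-s * gPDF s)) s := by
      have := (hasDerivAt_gPDF s).pow 2
      refine this.congr_deriv ?_; push_cast; ring
    have h3 : HasDerivAt (fun s : ℝ => s * gPDF s * (1 - gCDF s))
        ((gPDF s + s * (-s * gPDF s)) * (1 - gCDF s) + s * gPDF s * (-gPDF s)) s := by
      have := ((hasDerivAt_id s).mul (hasDerivAt_gPDF s)).mul hQ
      simp only [id] at this
      refine this.congr_deriv ?_; simp only [Pi.mul_apply, id]; ring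
    have := (h1.sub h2).add h3
    refine this.congr_deriv ?_
    ring
  have htop : Tendsto H atTop (𝓝 0) := by
    have h1 : Tendsto (fun s : ℝ => (1 - gCDF s) ^ 2) atTop (𝓝 0) := by
      have := Q_tendsto.mul Q_tendsto
      simpa [pow_two] using this
    have h2 : Tendsto (fun s : ℝ => gPDF s ^ 2) atTop (𝓝 0) := by
      have := gPDF_tendsto.mul gPDF_tendsto
      simpa [pow_two] using this
    have h3 : Tendsto (fun s : ℝ => s * gPDF s * (1 - gCDF s)) atTop (𝓝 0) := by
      have := mul_gPDF_tendsto.mul Q_tendsto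
      simpa using this
    have := (h1.sub h2).add h3
    simpa using this
  have key := integral_Ioi_of_hasDerivAt_of_nonpos' (a := u) (g := H)
    (g' := fun s => -(gPDF s * ((1 + s ^ 2) * (1 - gCDF s) - s * gPDF s)))
    (fun s _ => hderiv s)
    (fun s _ => by
      show -(gPDF s * ((1 + s ^ 2) * (1 - gCDF s) - s * gPDF s)) ≤ 0
      have hg := g_nonneg s
      have := gPDF_pos s
      nlinarith [mul_nonneg this.le (sub_nonneg.2 hg)])
    htop
  have hint : ∫ s in Ioi u, (-(gPDF s * ((1 + s ^ 2) * (1 - gCDF s) - s * gPDF s))) ≤ 0 := by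
    apply setIntegral_nonpos measurableSet_Ioi
    intro s _
    have hg := g_nonneg s
    have := gPDF_pos s
    nlinarith [mul_nonneg this.le (sub_nonneg.2 hg)]
  have hHu : 0 ≤ H u := by rw [key] at hint; linarith
  rw [hH] at hHu
  simp only at hHu
  nlinarith [hHu]

lemma mills_nonneg (u : ℝ) : 0 ≤ mills u :=
  div_nonneg (gPDF_pos u).le (Q_pos u).le

lemma mills_sub_nonneg (u : ℝ) : 0 ≤ mills u - u := by
  have hQ := Q_pos u
  have hk := k_nonneg u
  rw [mills, sub_nonneg, le_div_iff₀ hQ]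
  linarith

lemma mills_mul_le_one (u : ℝ) : mills u * (mills u - u) ≤ 1 := by
  have hQ := Q_pos u
  have hh := h_nonneg u
  rw [mills]
  have : gPDF u / (1 - gCDF u) * (gPDF u / (1 - gCDF u) - u)
      = (gPDF u * gPDF u - u * gPDF u * (1 - gCDF u)) / (1 - gCDF u) ^ 2 := by
    field_simp
  rw [this, div_le_one (by positivity)]
  exact hh

section
variable {m n : Type*} [Fintype m] [Fintype n]

lemma frob_eq_norm (M : Matrix m n ℝ) :
    frob M = ‖(WithLp.toLp 2 fun p : m × n => M p.1 p.2 : EuclideanSpace ℝ (m × n))‖ := by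
  rw [EuclideanSpace.norm_eq, frob, Fintype.sum_prod_type]
  congr 1
  refine Finset.sum_congr rfl fun i _ => Finset.sum_congr rfl fun j _ => ?_
  rw [Real.norm_eq_abs, sq_abs]

lemma frob_nonneg (M : Matrix m n ℝ) : 0 ≤ frob M := Real.sqrt_nonneg _

lemma frob_add_le (M N : Matrix m n ℝ) : frob (M + N) ≤ frob M + frob N := by
  rw [frob_eq_norm, frob_eq_norm, frob_eq_norm]
  exact norm_add_le (E := EuclideanSpace ℝ (m × n))
    (WithLp.toLp 2 fun p : m × n => M p.1 p.2) (WithLp.toLp 2 fun p : m × n => N p.1 p.2)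

lemma frob_smul (c : ℝ) (M : Matrix m n ℝ) : frob (c • M) = |c| * frob M := by
  rw [frob_eq_norm, frob_eq_norm]
  have : (WithLp.toLp 2 fun p : m × n => (c • M) p.1 p.2 : EuclideanSpace ℝ (m × n))
      = c • (WithLp.toLp 2 fun p : m × n => M p.1 p.2 : EuclideanSpace ℝ (m × n)) := rfl
  rw [this, norm_smul, Real.norm_eq_abs]

lemma frob_neg (M : Matrix m n ℝ) : frob (-M) = frob M := by
  have : -M = (-1 : ℝ) • M := by ext i j; simp
  rw [this, frob_smul]; simp

lemma frob_le_sum_abs (M : Matrix m n ℝ) : frob M ≤ ∑ i, ∑ j, |M i j| := by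
  rw [frob]
  have h1 : ∑ i, ∑ j, (M i j) ^ 2 ≤ (∑ i, ∑ j, |M i j|) ^ 2 := by
    calc ∑ i, ∑ j, (M i j) ^ 2 = ∑ p : m × n, |M p.1 p.2| ^ 2 := by
          rw [Fintype.sum_prod_type]
          exact Finset.sum_congr rfl fun i _ => Finset.sum_congr rfl fun j _ => (sq_abs _).symm
      _ ≤ (∑ p : m × n, |M p.1 p.2|) ^ 2 := by
          apply Finset.sum_sq_le_sq_sum_of_nonneg
          intro p _; exact abs_nonneg _
      _ = (∑ i, ∑ j, |M i j|) ^ 2 := by rw [Fintype.sum_prod_type]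
  calc Real.sqrt (∑ i, ∑ j, (M i j) ^ 2) ≤ Real.sqrt ((∑ i, ∑ j, |M i j|) ^ 2) :=
        Real.sqrt_le_sqrt h1
    _ = ∑ i, ∑ j, |M i j| := Real.sqrt_sq (by positivity)

end
lemma sum_abs_blockA (K : ℕ) (x : Fin K → ℝ) (y γ : ℝ) :
    ∑ i, ∑ j, |blockA K x y γ i j|
      = (∑ i, |x i|) * (∑ i, |x i|) + 2 * |y| * (∑ i, |x i|) + (γ⁻¹ ^ 2 + y ^ 2) := by
  rw [Fintype.sum_sum_type]
  simp only [blockA, Matrix.fromBlocks_apply₁₁, Matrix.fromBlocks_apply₁₂,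
    Matrix.fromBlocks_apply₂₁, Matrix.fromBlocks_apply₂₂, Matrix.of_apply,
    Matrix.vecMulVec_apply, Fintype.sum_sum_type, Fintype.sum_unique, abs_neg, abs_mul]
  simp only [Finset.sum_add_distrib, ← Finset.mul_sum, ← Finset.sum_mul_sum]
  rw [abs_of_nonneg (by positivity : (0:ℝ) ≤ γ⁻¹ ^ 2 + y ^ 2), ← Finset.sum_mul]
  ring

lemma frob_blockA_le (K : ℕ) (x : Fin K → ℝ) (y γ : ℝ) :
    frob (blockA K x y γ)
      ≤ (∑ i, |x i|) * (∑ i, |x i|) + 2 * |y| * (∑ i, |x i|) + (γ⁻¹ ^ 2 + y ^ 2) := by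
  rw [← sum_abs_blockA]; exact frob_le_sum_abs _

lemma sum_abs_blockB (K : ℕ) (x : Fin K → ℝ) (c : ℝ) :
    ∑ i, ∑ j, |blockB K x c i j|
      = (∑ i, |x i|) * (∑ i, |x i|) + 2 * |c| * (∑ i, |x i|) + c ^ 2 := by
  rw [Fintype.sum_sum_type]
  simp only [blockB, Matrix.fromBlocks_apply₁₁, Matrix.fromBlocks_apply₁₂,
    Matrix.fromBlocks_apply₂₁, Matrix.fromBlocks_apply₂₂, Matrix.of_apply,
    Matrix.vecMulVec_apply, Fintype.sum_sum_type, Fintype.sum_unique, abs_neg, abs_mul]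
  simp only [Finset.sum_add_distrib, ← Finset.mul_sum, ← Finset.sum_mul_sum]
  rw [abs_of_nonneg (sq_nonneg c), ← Finset.sum_mul]
  ring

lemma frob_blockB_le (K : ℕ) (x : Fin K → ℝ) (c : ℝ) :
    frob (blockB K x c)
      ≤ (∑ i, |x i|) * (∑ i, |x i|) + 2 * |c| * (∑ i, |x i|) + c ^ 2 := by
  rw [← sum_abs_blockB]; exact frob_le_sum_abs _

lemma frob_vecMulVec {K : ℕ} (x : Fin K → ℝ) :
    frob (Matrix.vecMulVec x x) = ∑ i, x i ^ 2 := by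
  rw [frob]
  have : ∑ i, ∑ j, (Matrix.vecMulVec x x i j) ^ 2 = (∑ i, x i ^ 2) * (∑ i, x i ^ 2) := by
    rw [Finset.sum_mul_sum]
    exact Finset.sum_congr rfl fun i _ => Finset.sum_congr rfl fun j _ => by
      rw [Matrix.vecMulVec_apply]; ring
  rw [this, Real.sqrt_mul_self (by positivity)]

lemma integrable_sq_gaussianReal (v : ℝ≥0) (hv : v ≠ 0) :
    Integrable (fun x : ℝ => x ^ 2) (gaussianReal 0 v) := by
  rw [gaussianReal_of_var_ne_zero _ hv,
    integrable_withDensity_iff (measurable_gaussianPDF _ _)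
      (ae_of_all _ fun x => ENNReal.ofReal_lt_top)]
  have hv0 : (0:ℝ) < (v : ℝ) := by positivity
  have hb : (0:ℝ) < 1 / (2 * (v:ℝ)) := by positivity
  have key := integrable_rpow_mul_exp_neg_mul_sq hb (s := ((2:ℕ):ℝ)) (by norm_num)
  have key2 : Integrable (fun x : ℝ => x ^ 2 * Real.exp (-(1/(2*(v:ℝ))) * x ^ 2)) := by
    simpa [Real.rpow_natCast] using key
  refine ((key2.const_mul (Real.sqrt (2 * Real.pi * (v:ℝ)))⁻¹).congr ?_)
  filter_upwards with x
  rw [gaussianPDF, ENNReal.toReal_ofReal (gaussianPDFReal_nonneg _ _ _), gaussianPDFReal]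
  have harg : -(1/(2*(v:ℝ))) * x ^ 2 = -(x - 0) ^ 2 / (2 * (v:ℝ)) := by
    field_simp
    ring
  rw [← harg]
  ring


/-! ### Auxiliary pointwise bound for the Hessian -/

lemma frob_tobitHess_le (K : ℕ) (c y : ℝ) (x : Fin K → ℝ) (d : ℝ)
    (hd0 : 0 ≤ d) (hd1 : d ≤ 1) (δ : Fin K → ℝ) (γ : ℝ) :
    frob (tobitHess K c y x d δ γ)
      ≤ ((∑ i, |x i|) * (∑ i, |x i|) + 2 * |y| * (∑ i, |x i|) + (γ⁻¹ ^ 2 + y ^ 2))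
        + ((∑ i, |x i|) * (∑ i, |x i|) + 2 * |c| * (∑ i, |x i|) + c ^ 2) := by
  set v : ℝ := γ * c - dotp x δ with hv
  set coef : ℝ := d * mills (-v) * (mills (-v) + v) with hcoef
  have hsplit : tobitHess K c y x d δ γ
      = (-((1 - d) • blockA K x y γ)) + (-(coef • blockB K x c)) := by
    rw [tobitHess, sub_eq_add_neg]
  have hm0 := mills_nonneg (-v)
  have hm1 : 0 ≤ mills (-v) + v := by
    have := mills_sub_nonneg (-v); simpa [sub_neg_eq_add] using this
  have hm2 : mills (-v) * (mills (-v) + v) ≤ 1 := by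
    have := mills_mul_le_one (-v); simpa [sub_neg_eq_add] using this
  have hcoef0 : 0 ≤ coef := by
    rw [hcoef, mul_assoc]
    exact mul_nonneg hd0 (mul_nonneg hm0 hm1)
  have hcoef1 : coef ≤ 1 := by
    rw [hcoef, mul_assoc]
    calc d * (mills (-v) * (mills (-v) + v)) ≤ 1 * 1 :=
          mul_le_mul hd1 hm2 (mul_nonneg hm0 hm1) (by norm_num)
      _ = 1 := by norm_num
  have h1d : |1 - d| ≤ 1 := by rw [abs_le]; constructor <;> linarith
  have hfa := frob_blockA_le K x y γ
  have hfb := frob_blockB_le K x c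
  have hfa0 := frob_nonneg (blockA K x y γ)
  have hfb0 := frob_nonneg (blockB K x c)
  calc frob (tobitHess K c y x d δ γ)
      ≤ frob (-((1 - d) • blockA K x y γ)) + frob (-(coef • blockB K x c)) := by
        rw [hsplit]; exact frob_add_le _ _
    _ = |1 - d| * frob (blockA K x y γ) + |coef| * frob (blockB K x c) := by
        rw [frob_neg, frob_neg, frob_smul, frob_smul]
    _ ≤ 1 * frob (blockA K x y γ) + 1 * frob (blockB K x c) := by
        apply add_le_add
        · exact mul_le_mul_of_nonneg_right h1d hfa0
        · refine mul_le_mul_of_nonneg_right ?_ hfb0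
          rw [abs_of_nonneg hcoef0]; exact hcoef1
    _ ≤ _ := by rw [one_mul, one_mul]; exact add_le_add hfa hfb


set_option maxHeartbeats 2000000 in
/-- Local dominance condition on the Hessian of the Tobit model: if `E[‖X Xᵀ‖] < ∞`
then there is a neighborhood `N` of `(δ₀, γ₀)` in `ℝ^K × (0,∞)` with
`E[sup_{(δ,γ) ∈ N} ‖H(Y, X, D; δ, γ)‖] < ∞`. -/
theorem tobit_local_dominance (K : ℕ) (hK : 0 < K) {Ω : Type*} [MeasurableSpace Ω]
    (P : Measure Ω) [IsProbabilityMeasure P]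
    (X : Ω → Fin K → ℝ) (hX : Measurable X) (ε : Ω → ℝ) (hε : Measurable ε)
    (σ₀ : ℝ) (hσ : 0 < σ₀)
    (hgauss : Measure.map ε P = gaussianReal 0 ⟨σ₀ ^ 2, sq_nonneg σ₀⟩)
    (hindep : IndepFun X ε P)
    (β₀ : Fin K → ℝ) (c : ℝ)
    (Y : Ω → ℝ) (hY : ∀ ω, Y ω = max (dotp (X ω) β₀ + ε ω) c)
    (D : Ω → ℝ) (hD : ∀ ω, D ω = if dotp (X ω) β₀ + ε ω ≤ c then 1 else 0)
    (δ₀ : Fin K → ℝ) (hδ₀ : δ₀ = fun i => β₀ i / σ₀) (γ₀ : ℝ) (hγ₀ : γ₀ = 1 / σ₀)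
    (hint : Integrable (fun ω => frob (Matrix.vecMulVec (X ω) (X ω))) P) :
    ∃ N ∈ nhds ((δ₀, γ₀) : (Fin K → ℝ) × ℝ), (∀ p ∈ N, 0 < p.2) ∧
      ∫⁻ ω, ENNReal.ofReal
        (⨆ p ∈ N, frob (tobitHess K c (Y ω) (X ω) (D ω) p.1 p.2)) ∂P < ⊤ := by
  have hγ₀pos : 0 < γ₀ := by rw [hγ₀]; positivity
  set N : Set ((Fin K → ℝ) × ℝ) := (univ : Set (Fin K → ℝ)) ×ˢ Ioi (γ₀ / 2) with hNdef
  have hN : N ∈ nhds ((δ₀, γ₀) : (Fin K → ℝ) × ℝ) :=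
    prod_mem_nhds univ_mem (Ioi_mem_nhds (by linarith))
  have hNpos : ∀ p ∈ N, 0 < p.2 := by
    intro p hp
    have h : γ₀ / 2 < p.2 := hp.2
    linarith
  -- notation
  set s1 : Ω → ℝ := fun ω => ∑ i, |X ω i| with hs1def
  set B : ℝ := ∑ i, |β₀ i| with hBdef
  set Cγ : ℝ := ((γ₀ / 2)⁻¹) ^ 2 with hCγdef
  have hB0 : 0 ≤ B := Finset.sum_nonneg fun i _ => abs_nonneg _
  have hCγ0 : 0 ≤ Cγ := sq_nonneg _
  have hs1nn : ∀ ω, 0 ≤ s1 ω := fun ω => Finset.sum_nonneg fun i _ => abs_nonneg _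
  set G : Ω → ℝ := fun ω => (2 + 2 * B + 3 * B ^ 2) * (s1 ω) ^ 2 + (4 * |c|) * s1 ω
      + 2 * (|ε ω| * s1 ω) + 3 * (ε ω) ^ 2 + (Cγ + 4 * c ^ 2) with hGdef
  have hGnn : ∀ ω, 0 ≤ G ω := by
    intro ω
    have h1 := hs1nn ω
    have hc1 : (0:ℝ) ≤ 2 + 2 * B + 3 * B ^ 2 := by nlinarith [sq_nonneg B]
    have t1 : (0:ℝ) ≤ (2 + 2 * B + 3 * B ^ 2) * (s1 ω) ^ 2 := mul_nonneg hc1 (sq_nonneg _)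
    have t2 : (0:ℝ) ≤ (4 * |c|) * s1 ω := mul_nonneg (by positivity) h1
    have t3 : (0:ℝ) ≤ 2 * (|ε ω| * s1 ω) :=
      mul_nonneg (by norm_num) (mul_nonneg (abs_nonneg _) h1)
    have t4 : (0:ℝ) ≤ 3 * (ε ω) ^ 2 := by positivity
    have t5 : (0:ℝ) ≤ Cγ + 4 * c ^ 2 := add_nonneg hCγ0 (by positivity)
    have : G ω = (2 + 2 * B + 3 * B ^ 2) * (s1 ω) ^ 2 + (4 * |c|) * s1 ω
        + 2 * (|ε ω| * s1 ω) + 3 * (ε ω) ^ 2 + (Cγ + 4 * c ^ 2) := rfl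
    linarith
  -- pointwise bound
  have hdab : ∀ ω, 0 ≤ D ω ∧ D ω ≤ 1 := by
    intro ω; rw [hD ω]; split <;> norm_num
  have hdot : ∀ ω, |dotp (X ω) β₀| ≤ B * s1 ω := by
    intro ω
    rw [dotp]
    calc |∑ i, X ω i * β₀ i| ≤ ∑ i, |X ω i * β₀ i| := Finset.abs_sum_le_sum_abs _ _
      _ ≤ ∑ i, B * |X ω i| := by
          apply Finset.sum_le_sum
          intro i _
          rw [abs_mul, mul_comm]
          apply mul_le_mul_of_nonneg_right _ (abs_nonneg _)
          exact Finset.single_le_sum (fun j _ => abs_nonneg (β₀ j)) (Finset.mem_univ i)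
      _ = B * s1 ω := by rw [← Finset.mul_sum]
  have hYabs : ∀ ω, |Y ω| ≤ B * s1 ω + |ε ω| + |c| := by
    intro ω
    rw [hY ω]
    calc |max (dotp (X ω) β₀ + ε ω) c| ≤ max |dotp (X ω) β₀ + ε ω| |c| :=
          abs_max_le_max_abs_abs
      _ ≤ |dotp (X ω) β₀ + ε ω| + |c| := by
          have h0 := abs_nonneg (dotp (X ω) β₀ + ε ω)
          have h0' := abs_nonneg c
          exact max_le (by linarith) (by linarith)
      _ ≤ (|dotp (X ω) β₀| + |ε ω|) + |c| := by
          have := abs_add_le (dotp (X ω) β₀) (ε ω); linarith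
      _ ≤ B * s1 ω + |ε ω| + |c| := by have := hdot ω; linarith
  have hbound : ∀ ω, ∀ p ∈ N,
      frob (tobitHess K c (Y ω) (X ω) (D ω) p.1 p.2) ≤ G ω := by
    intro ω p hp
    have hγ : γ₀ / 2 < p.2 := hp.2
    have hγpos : 0 < p.2 := lt_trans (by linarith) hγ
    have hγinv : (p.2)⁻¹ ^ 2 ≤ Cγ := by
      rw [hCγdef]
      have h1 : (p.2)⁻¹ ≤ (γ₀ / 2)⁻¹ := by
        apply inv_anti₀ (by linarith) hγ.le
      have h2 : 0 ≤ (p.2)⁻¹ := by positivity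
      exact pow_le_pow_left₀ h2 h1 2
    have key := frob_tobitHess_le K c (Y ω) (X ω) (D ω) (hdab ω).1 (hdab ω).2 p.1 p.2
    have hys1 : |Y ω| * s1 ω ≤ B * (s1 ω) ^ 2 + |ε ω| * s1 ω + |c| * s1 ω := by
      have := mul_le_mul_of_nonneg_right (hYabs ω) (hs1nn ω)
      nlinarith
    have hy2 : (Y ω) ^ 2 ≤ 3 * B ^ 2 * (s1 ω) ^ 2 + 3 * (ε ω) ^ 2 + 3 * c ^ 2 := by
      have h1 := mul_self_le_mul_self (abs_nonneg (Y ω)) (hYabs ω)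
      have h2 : (Y ω) ^ 2 = |Y ω| * |Y ω| := by rw [← sq_abs]; ring
      have h3 : (ε ω) ^ 2 = |ε ω| * |ε ω| := by rw [← sq_abs]; ring
      have h4 : c ^ 2 = |c| * |c| := by rw [← sq_abs]; ring
      nlinarith [sq_nonneg (B * s1 ω - |ε ω|), sq_nonneg (B * s1 ω - |c|),
        sq_nonneg (|ε ω| - |c|)]
    have hs1sq : (∑ i, |X ω i|) * (∑ i, |X ω i|) = (s1 ω) ^ 2 := by rw [sq]
    rw [hGdef]
    simp only
    calc frob (tobitHess K c (Y ω) (X ω) (D ω) p.1 p.2)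
        ≤ ((∑ i, |X ω i|) * (∑ i, |X ω i|) + 2 * |Y ω| * (∑ i, |X ω i|)
            + ((p.2)⁻¹ ^ 2 + (Y ω) ^ 2))
          + ((∑ i, |X ω i|) * (∑ i, |X ω i|) + 2 * |c| * (∑ i, |X ω i|) + c ^ 2) := key
      _ ≤ _ := by
        rw [hs1sq]
        have hxx : (∑ i, |X ω i|) = s1 ω := rfl
        rw [hxx]
        nlinarith [hys1, hy2, hγinv]
  -- integrability of the dominating function
  have hXi : ∀ i, Measurable fun ω => X ω i := fun i => (measurable_pi_apply i).comp hX
  have hs1meas : Measurable s1 := Finset.measurable_sum _ fun i _ => (hXi i).abs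
  have hs2int : Integrable (fun ω => ∑ i, (X ω i) ^ 2) P := by
    have : (fun ω => frob (Matrix.vecMulVec (X ω) (X ω))) = fun ω => ∑ i, (X ω i) ^ 2 := by
      funext ω; exact frob_vecMulVec (X ω)
    rwa [this] at hint
  have hs1sqint : Integrable (fun ω => (s1 ω) ^ 2) P := by
    apply (hs2int.const_mul (K : ℝ)).mono'
      ((hs1meas.pow_const 2).aestronglyMeasurable)
    filter_upwards with ω
    rw [Real.norm_eq_abs, abs_of_nonneg (sq_nonneg _)]
    calc (s1 ω) ^ 2 ≤ (Finset.univ.card : ℝ) * ∑ i, |X ω i| ^ 2 :=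
          sq_sum_le_card_mul_sum_sq
      _ = (K : ℝ) * ∑ i, (X ω i) ^ 2 := by
          simp [sq_abs, Finset.card_univ]
  have hs1int : Integrable s1 P := by
    apply ((integrable_const (1 : ℝ)).add hs1sqint).mono' hs1meas.aestronglyMeasurable
    filter_upwards with ω
    rw [Real.norm_eq_abs, abs_of_nonneg (hs1nn ω)]
    simp only [Pi.add_apply]
    nlinarith [hs1nn ω, sq_nonneg (s1 ω - 1)]
  have hvne : (⟨σ₀ ^ 2, sq_nonneg σ₀⟩ : ℝ≥0) ≠ 0 := by
    intro h
    have := congrArg NNReal.toReal h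
    change σ₀ ^ 2 = 0 at this
    exact (pow_ne_zero 2 hσ.ne') this
  have hε2int : Integrable (fun ω => (ε ω) ^ 2) P := by
    have key := integrable_sq_gaussianReal _ hvne
    have key2 : Integrable (fun x : ℝ => x ^ 2) (Measure.map ε P) := by rw [hgauss]; exact key
    have := (integrable_map_measure
      ((measurable_id.pow_const 2).aestronglyMeasurable) hε.aemeasurable).mp key2
    exact this
  have hεabsint : Integrable (fun ω => |ε ω|) P := by
    apply ((integrable_const (1 : ℝ)).add hε2int).mono' hε.abs.aestronglyMeasurable
    filter_upwards with ω
    rw [Real.norm_eq_abs, abs_abs]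
    simp only [Pi.add_apply]
    nlinarith [abs_nonneg (ε ω), sq_nonneg (|ε ω| - 1), sq_abs (ε ω)]
  have hcross : Integrable (fun ω => |ε ω| * s1 ω) P := by
    have hφ : Measurable fun v : Fin K → ℝ => ∑ i, |v i| :=
      Finset.measurable_sum _ fun i _ => (measurable_pi_apply i).abs
    have hi : IndepFun (fun ω => |ε ω|) s1 P := by
      have := hindep.symm.comp (measurable_abs) hφ
      exact this
    have := hi.integrable_mul hεabsint hs1int
    exact this
  have hGint : Integrable G P := by
    rw [hGdef]
    exact ((((hs1sqint.const_mul _).add (hs1int.const_mul _)).add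
      (hcross.const_mul 2)).add (hε2int.const_mul 3)).add (integrable_const _)
  refine ⟨N, hN, hNpos, ?_⟩
  refine lt_of_le_of_lt (lintegral_mono fun ω => ?_) hGint.2
  have hsup : (⨆ p ∈ N, frob (tobitHess K c (Y ω) (X ω) (D ω) p.1 p.2)) ≤ G ω :=
    Real.iSup_le (fun p => Real.iSup_le (fun hp => hbound ω p hp) (hGnn ω)) (hGnn ω)
  calc ENNReal.ofReal (⨆ p ∈ N, frob (tobitHess K c (Y ω) (X ω) (D ω) p.1 p.2))
      ≤ ENNReal.ofReal (G ω) := ENNReal.ofReal_le_ofReal hsup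
    _ ≤ ‖G ω‖ₑ := Real.ofReal_le_enorm _
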